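/- Let ξ₁, ξ₂ be reals with 0 < ξ₁ ≤ 1 and 0 < ξ₂ < 1. Then there exists Δ > 0, depending only on ξ₁ and ξ₂, such that for every k ≥ 1, all α₁,…,α_k, β₁,…,β_k ∈ [0, 1/2], and all weights p₁,…,p_k, q₁,…,q_k ≥ 0 with Σ_{a=1}^{k} p_a = Σ_{b=1}^{k} q_b = 1, if Σ_{a=1}^{k} p_a·h₂(α_a) ≥ ξ₁ and Σ_{b=1}^{k} q_b·h₂(β_b) ≤ ξ₂, then Σ_{a=1}^{k} Σ_{b=1}^{k} p_a·q_b·( h₂(α_a * β_b) − h₂(β_b) ) ≥ Δ. -/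
import Mathlib

set_option maxHeartbeats 1000000



/-- The binary entropy function `h₂(x) = −x log₂ x − (1−x) log₂ (1−x)`
(with `0 · log₂ 0 = 0`, automatic since `Real.logb 2 0 = 0`). -/
noncomputable def h2 (x : ℝ) : ℝ := -x * Real.logb 2 x - (1 - x) * Real.logb 2 (1 - x)

/-- The (cyclic) convolution `α * β = α(1−β) + β(1−α)`. -/
def convo (a b : ℝ) : ℝ := a * (1 - b) + b * (1 - a)

lemma h2_eq (x : ℝ) : h2 x = Real.binEntropy x / Real.log 2 := by
  simp only [h2, Real.binEntropy, Real.logb, Real.log_inv]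
  ring

lemma log2_pos : (0:ℝ) < Real.log 2 := Real.log_pos (by norm_num)

lemma h2_cont : Continuous h2 := by
  simp only [funext h2_eq]
  exact Real.binEntropy_continuous.div_const _

lemma h2_zero : h2 0 = 0 := by simp [h2_eq]

lemma h2_half : h2 (1/2) = 1 := by
  rw [h2_eq, one_div, Real.binEntropy_two_inv, div_self log2_pos.ne']

lemma h2_le_one (x : ℝ) : h2 x ≤ 1 := by
  rw [h2_eq, div_le_one log2_pos]
  exact Real.binEntropy_le_log_two

lemma h2_nonneg {x : ℝ} (h0 : 0 ≤ x) (h1 : x ≤ 1) : 0 ≤ h2 x := by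
  rw [h2_eq]
  exact div_nonneg (Real.binEntropy_nonneg h0 h1) log2_pos.le

lemma h2_mono {x y : ℝ} (hx : 0 ≤ x) (hxy : x ≤ y) (hy : y ≤ 1/2) : h2 x ≤ h2 y := by
  rw [h2_eq, h2_eq, div_le_div_iff_of_pos_right log2_pos]
  exact Real.binEntropy_strictMonoOn.monotoneOn
    ⟨hx, by linarith [hxy, hy]⟩ ⟨by linarith, by linarith⟩ hxy

lemma h2_strict_mono {x y : ℝ} (hx : 0 ≤ x) (hxy : x < y) (hy : y ≤ 1/2) : h2 x < h2 y := by
  rw [h2_eq, h2_eq, div_lt_div_iff_of_pos_right log2_pos]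
  exact Real.binEntropy_strictMonoOn ⟨hx, by linarith⟩ ⟨by linarith, by linarith⟩ hxy

lemma convo_le_half {a b : ℝ} (ha : a ≤ 1/2) (hb : b ≤ 1/2) : convo a b ≤ 1/2 := by
  unfold convo; nlinarith

lemma le_convo {a b : ℝ} (ha : 0 ≤ a) (hb : b ≤ 1/2) : b ≤ convo a b := by
  unfold convo; nlinarith

/-- For `0 < ξ₁ ≤ 1` and `0 < ξ₂ < 1` there is `Δ > 0` such that for any
`α_a, β_b ∈ [0,1/2]` and any probability weights `p, q`, if `∑ p_a h₂(α_a) ≥ ξ₁` and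
`∑ q_b h₂(β_b) ≤ ξ₂`, then `∑_{a,b} p_a q_b (h₂(α_a * β_b) − h₂(β_b)) ≥ Δ`. -/
theorem stmt_18 (ξ₁ ξ₂ : ℝ) (hξ₁0 : 0 < ξ₁) (hξ₁1 : ξ₁ ≤ 1) (hξ₂0 : 0 < ξ₂) (hξ₂1 : ξ₂ < 1) :
    ∃ Δ > (0 : ℝ), ∀ (k : ℕ), 1 ≤ k → ∀ α β p q : Fin k → ℝ,
      (∀ a, α a ∈ Set.Icc (0 : ℝ) (1 / 2)) →
      (∀ b, β b ∈ Set.Icc (0 : ℝ) (1 / 2)) →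
      (∀ a, 0 ≤ p a) → (∀ b, 0 ≤ q b) →
      (∑ a, p a) = 1 → (∑ b, q b) = 1 →
      ξ₁ ≤ ∑ a, p a * h2 (α a) →
      (∑ b, q b * h2 (β b)) ≤ ξ₂ →
      Δ ≤ ∑ a, ∑ b, p a * q b * (h2 (convo (α a) (β b)) - h2 (β b)) := by
  -- Step 1: find c₁ ∈ (0, 1/2] such that h2 x ≥ ξ₁/2 implies x ≥ c₁ (for x ∈ [0,1/2]).
  obtain ⟨δ₁, hδ₁0, hδ₁⟩ : ∃ δ > (0:ℝ), ∀ x : ℝ, dist x 0 < δ → dist (h2 x) (h2 0) < ξ₁/2 := by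
    have := Metric.continuousAt_iff.mp (h2_cont.continuousAt (x := 0))
    exact this (ξ₁/2) (by linarith)
  set c₁ : ℝ := min (δ₁/2) (1/2) with hc₁def
  have hc₁0 : 0 < c₁ := lt_min (by linarith) (by norm_num)
  have hc₁half : c₁ ≤ 1/2 := min_le_right _ _
  have hc₁ : ∀ x : ℝ, 0 ≤ x → ξ₁/2 ≤ h2 x → c₁ ≤ x := by
    intro x hx0 hx
    by_contra hlt
    push_neg at hlt
    have hxδ : dist x 0 < δ₁ := by
      rw [Real.dist_eq, sub_zero, abs_of_nonneg hx0]
      have := lt_of_lt_of_le hlt (min_le_left _ _)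
      linarith
    have := hδ₁ x hxδ
    rw [h2_zero, Real.dist_eq, sub_zero] at this
    have := le_abs_self (h2 x)
    linarith
  -- Step 2: find c₂ ∈ [0, 1/2) such that h2 x ≤ (1+ξ₂)/2 implies x ≤ c₂ (for x ∈ [0,1/2]).
  obtain ⟨δ₂, hδ₂0, hδ₂⟩ : ∃ δ > (0:ℝ), ∀ x : ℝ, dist x (1/2) < δ →
      dist (h2 x) (h2 (1/2)) < (1-ξ₂)/2 := by
    have := Metric.continuousAt_iff.mp (h2_cont.continuousAt (x := 1/2))
    exact this ((1-ξ₂)/2) (by linarith)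
  set c₂ : ℝ := max (1/2 - δ₂/2) (1/4) with hc₂def
  have hc₂0 : 0 ≤ c₂ := le_max_of_le_right (by norm_num)
  have hc₂half : c₂ < 1/2 := max_lt (by linarith) (by norm_num)
  have hc₂ : ∀ x : ℝ, x ≤ 1/2 → h2 x ≤ (1+ξ₂)/2 → x ≤ c₂ := by
    intro x hx1 hx
    by_contra hlt
    push_neg at hlt
    have h1 : 1/2 - δ₂/2 < x := lt_of_le_of_lt (le_max_left _ _) hlt
    have hxδ : dist x (1/2) < δ₂ := by
      rw [Real.dist_eq, abs_sub_lt_iff]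
      constructor <;> linarith
    have := hδ₂ x hxδ
    rw [h2_half, Real.dist_eq] at this
    have h2' := neg_abs_le (h2 x - 1)
    have habs := abs_sub_lt_iff.mp this
    linarith [habs.2]
  -- Step 3: ε := min of g on [0, c₂], where g β = h2 ((1-2c₁)β + c₁) - h2 β.
  set g : ℝ → ℝ := fun y => h2 ((1 - 2*c₁) * y + c₁) - h2 y with hgdef
  have hgcont : ContinuousOn g (Set.Icc 0 c₂) :=
    ((h2_cont.comp (by continuity)).sub h2_cont).continuousOn
  obtain ⟨y₀, hy₀mem, hy₀min⟩ :=
    isCompact_Icc.exists_isMinOn (Set.nonempty_Icc.mpr hc₂0) hgcont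
  set ε : ℝ := g y₀ with hεdef
  have hgpos : ∀ y ∈ Set.Icc (0:ℝ) c₂, 0 < g y := by
    rintro y ⟨hy0, hyc⟩
    have hy2 : y < 1/2 := lt_of_le_of_lt hyc hc₂half
    have harg : y < (1 - 2*c₁) * y + c₁ := by nlinarith
    have harg2 : (1 - 2*c₁) * y + c₁ ≤ 1/2 := by nlinarith
    have := h2_strict_mono hy0 harg harg2
    simp only [hgdef]
    linarith
  have hε0 : 0 < ε := hgpos y₀ hy₀mem
  -- the constant
  set Q₀ : ℝ := (1 - ξ₂)/(1 + ξ₂) with hQ₀def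
  have hQ₀0 : 0 < Q₀ := div_pos (by linarith) (by linarith)
  refine ⟨(ξ₁/2) * Q₀ * ε, by positivity, ?_⟩
  intro k hk α β p q hα hβ hp hq hpsum hqsum hpent hqent
  -- good index sets
  set A : Finset (Fin k) := Finset.univ.filter (fun a => ξ₁/2 ≤ h2 (α a)) with hAdef
  set B : Finset (Fin k) := Finset.univ.filter (fun b => h2 (β b) ≤ (1+ξ₂)/2) with hBdef
  set P : ℝ := ∑ a ∈ A, p a with hPdef
  set Q : ℝ := ∑ b ∈ B, q b with hQdef
  have hP0 : 0 ≤ P := Finset.sum_nonneg fun a _ => hp a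
  have hQ1 : Q ≤ 1 := by
    rw [hQdef, ← hqsum]
    exact Finset.sum_le_sum_of_subset_of_nonneg (Finset.subset_univ _) fun b _ _ => hq b
  -- Markov bound for P
  have hPbound : ξ₁/2 ≤ P := by
    have hsplit : ∑ a, p a * h2 (α a)
        = ∑ a ∈ A, p a * h2 (α a) + ∑ a ∈ Aᶜ, p a * h2 (α a) :=
      (Finset.sum_add_sum_compl A _).symm
    have h1 : ∑ a ∈ A, p a * h2 (α a) ≤ P :=
      Finset.sum_le_sum fun a _ => by
        nlinarith [h2_le_one (α a), hp a, h2_nonneg (hα a).1 (le_trans (hα a).2 (by norm_num))]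
    have h2' : ∑ a ∈ Aᶜ, p a * h2 (α a) ≤ (1 - P) * (ξ₁/2) := by
      have hcs : ∑ a ∈ Aᶜ, p a = 1 - P := by
        have := Finset.sum_add_sum_compl A p
        rw [hpsum] at this; linarith [this]
      rw [← hcs, Finset.sum_mul]
      refine Finset.sum_le_sum fun a ha => ?_
      have : ¬ (ξ₁/2 ≤ h2 (α a)) := by
        simpa [hAdef] using (Finset.mem_compl.mp ha)
      push_neg at this
      nlinarith [hp a]
    nlinarith [hpent]
  -- Markov bound for Q
  have hQbound : Q₀ ≤ Q := by
    have hdrop : ∑ b ∈ Bᶜ, q b * h2 (β b) ≤ ∑ b, q b * h2 (β b) := by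
      rw [← Finset.sum_add_sum_compl B (fun b => q b * h2 (β b))]
      have : 0 ≤ ∑ b ∈ B, q b * h2 (β b) :=
        Finset.sum_nonneg fun b _ =>
          mul_nonneg (hq b) (h2_nonneg (hβ b).1 (le_trans (hβ b).2 (by norm_num)))
      linarith
    have hlb : (1 - Q) * ((1+ξ₂)/2) ≤ ∑ b ∈ Bᶜ, q b * h2 (β b) := by
      have hcs : ∑ b ∈ Bᶜ, q b = 1 - Q := by
        have := Finset.sum_add_sum_compl B q
        rw [hqsum] at this; linarith [this]
      rw [← hcs, Finset.sum_mul]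
      refine Finset.sum_le_sum fun b hb => ?_
      have : ¬ (h2 (β b) ≤ (1+ξ₂)/2) := by
        simpa [hBdef] using (Finset.mem_compl.mp hb)
      push_neg at this
      nlinarith [hq b]
    have hQ1' : (1 - Q) * ((1+ξ₂)/2) ≤ ξ₂ := le_trans hlb (le_trans hdrop hqent)
    rw [hQ₀def, div_le_iff₀ (by linarith : (0:ℝ) < 1 + ξ₂)]
    nlinarith
  -- termwise bounds
  have hT0 : ∀ a b, 0 ≤ h2 (convo (α a) (β b)) - h2 (β b) := by
    intro a b
    have := h2_mono (hβ b).1 (le_convo (hα a).1 (hβ b).2) (convo_le_half (hα a).2 (hβ b).2)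
    linarith
  have hTε : ∀ a ∈ A, ∀ b ∈ B, ε ≤ h2 (convo (α a) (β b)) - h2 (β b) := by
    intro a ha b hb
    have haA : ξ₁/2 ≤ h2 (α a) := by simpa [hAdef] using ha
    have hbB : h2 (β b) ≤ (1+ξ₂)/2 := by simpa [hBdef] using hb
    have hαc : c₁ ≤ α a := hc₁ _ (hα a).1 haA
    have hβc : β b ≤ c₂ := hc₂ _ (hβ b).2 hbB
    have hbmem : β b ∈ Set.Icc (0:ℝ) c₂ := ⟨(hβ b).1, hβc⟩
    have hεg : ε ≤ g (β b) := hy₀min hbmem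
    have hmid : (1 - 2*c₁) * (β b) + c₁ ≤ convo (α a) (β b) := by
      have h1 : 0 ≤ 1 - 2 * β b := by linarith [(hβ b).2]
      unfold convo; nlinarith [(hα a).1]
    have hmid0 : 0 ≤ (1 - 2*c₁) * (β b) + c₁ := by nlinarith [(hβ b).1, (hβ b).2]
    have hmono := h2_mono hmid0 hmid (convo_le_half (hα a).2 (hβ b).2)
    simp only [hgdef] at hεg
    linarith
  -- assemble
  have hstep1 : ∑ a ∈ A, ∑ b ∈ B, p a * q b * (h2 (convo (α a) (β b)) - h2 (β b))
      ≤ ∑ a, ∑ b, p a * q b * (h2 (convo (α a) (β b)) - h2 (β b)) := by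
    refine Finset.sum_le_sum_of_subset_of_nonneg (Finset.subset_univ _) ?_ |>.trans ?_
    · intro a _ _
      exact Finset.sum_nonneg fun b _ =>
        mul_nonneg (mul_nonneg (hp a) (hq b)) (hT0 a b)
    · refine Finset.sum_le_sum fun a _ => ?_
      exact Finset.sum_le_sum_of_subset_of_nonneg (Finset.subset_univ _) fun b _ _ =>
        mul_nonneg (mul_nonneg (hp a) (hq b)) (hT0 a b)
  have hstep2 : P * Q * ε ≤ ∑ a ∈ A, ∑ b ∈ B, p a * q b * (h2 (convo (α a) (β b)) - h2 (β b)) := by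
    have : P * Q * ε = ∑ a ∈ A, ∑ b ∈ B, p a * q b * ε := by
      rw [hPdef, hQdef, Finset.sum_mul_sum, Finset.sum_mul]
      exact Finset.sum_congr rfl fun a _ => by rw [Finset.sum_mul]
    rw [this]
    refine Finset.sum_le_sum fun a ha => Finset.sum_le_sum fun b hb => ?_
    exact mul_le_mul_of_nonneg_left (hTε a ha b hb) (mul_nonneg (hp a) (hq b))
  have hfinal : (ξ₁/2) * Q₀ * ε ≤ P * Q * ε := by
    have h1 : (ξ₁/2) * Q₀ ≤ P * Q := by nlinarith
    exact mul_le_mul_of_nonneg_right h1 hε0.le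
  exact le_trans hfinal (le_trans hstep2 hstep1)
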